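/- arXiv:math/0512326 — 3 statements merged into one kernel-verified Lean document; each statement's English description precedes it below -/
import Mathlib

section
/- If A = (a_{jn}) is a non-negative regular summability matrix with \lim_j \max_n a_{jn} = 0, then there exists a non-negative real sequence (u_n) that is A-statistically convergent to 1 but not convergent in the ordinary sense. -/
open Filter Topology

/-- The matrix `A = (a j n)` has non-negative entries. -/
def RowNonneg (a : ℕ → ℕ → ℝ) : Prop := ∀ j n, 0 ≤ a j n

/-- `A` is a regular summability matrix: the `A`-transform of any convergent
sequence converges to the same limit. -/
def Regular (a : ℕ → ℕ → ℝ) : Prop :=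
  ∀ (x : ℕ → ℝ) (L : ℝ), Tendsto x atTop (𝓝 L) →
    Tendsto (fun j => ∑' n, a j n * x n) atTop (𝓝 L)

/-- `x` is `A`-statistically convergent to `L`. -/
def AStatTendsto (a : ℕ → ℕ → ℝ) (x : ℕ → ℝ) (L : ℝ) : Prop :=
  ∀ ε > 0, Tendsto (fun j => ∑' n, if ε ≤ |x n - L| then a j n else 0) atTop (𝓝 0)

/-- If `A` is a non-negative regular summability matrix with
`lim_j max_n a j n = 0`, then there is a non-negative sequence that is
`A`-statistically convergent to `1` but not convergent. -/
theorem stmt1 (a : ℕ → ℕ → ℝ) (ha : RowNonneg a) (hreg : Regular a)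
    (hb : ∀ j, BddAbove (Set.range (a j)))
    (hmax : Tendsto (fun j => ⨆ n, a j n) atTop (𝓝 0)) :
    ∃ u : ℕ → ℝ, (∀ n, 0 ≤ u n) ∧ AStatTendsto a u 1 ∧
      ¬ ∃ L : ℝ, Tendsto u atTop (𝓝 L) := by
  classical
  -- Row sums tend to 1
  have hsum1 : Tendsto (fun j => ∑' n, a j n) atTop (𝓝 1) := by
    have h := hreg (fun _ => 1) 1 tendsto_const_nhds
    simpa using h
  -- Eventually rows are summable
  obtain ⟨J₀, hJ₀⟩ : ∃ J₀, ∀ j ≥ J₀, Summable (a j) := by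
    have h := (tendsto_order.1 hsum1).1 (1/2) (by norm_num)
    obtain ⟨J, hJ⟩ := eventually_atTop.1 h
    refine ⟨J, fun j hj => ?_⟩
    by_contra hns
    have := hJ j hj
    rw [tsum_eq_zero_of_not_summable hns] at this
    linarith
  -- Thresholds for the sup condition
  have hsup : ∀ k : ℕ, ∃ J, ∀ j ≥ J, (⨆ n, a j n) < (4:ℝ)⁻¹ ^ k := by
    intro k
    exact eventually_atTop.1 ((tendsto_order.1 hmax).2 _ (by positivity))
  choose Js hJs using hsup
  -- The sequence of row thresholds
  obtain ⟨jf, hjf_succ, hjf0, hjfs⟩ : ∃ jf : ℕ → ℕ, (∀ k, jf k + 1 ≤ jf (k + 1)) ∧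
      J₀ ≤ jf 0 ∧ (∀ k, Js k ≤ jf k) := by
    refine ⟨fun k => Nat.rec (max J₀ (Js 0)) (fun k ih => max (ih + 1) (Js (k + 1))) k,
      fun k => le_max_left _ _, le_max_left _ _, fun k => ?_⟩
    cases k with
    | zero => exact le_max_right _ _
    | succ k => exact le_max_right _ _
  have hjf_mono : StrictMono jf := strictMono_nat_of_lt_succ (fun k => hjf_succ k)
  have hjfJ0 : ∀ k, J₀ ≤ jf k := fun k => le_trans hjf0 (hjf_mono.monotone (Nat.zero_le k))
  have hsupk : ∀ k, ∀ j, jf k ≤ j → (⨆ n, a j n) < (4:ℝ)⁻¹ ^ k :=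
    fun k j hj => hJs k j (le_trans (hjfs k) hj)
  -- Thresholds for the tail sums
  have htail : ∀ k : ℕ, ∃ T, ∀ N ≥ T, ∀ i ∈ Finset.Icc J₀ (jf k),
      ∑' m, a i (m + N) < (2:ℝ)⁻¹ ^ k := by
    intro k
    have h : ∀ᶠ N in atTop, ∀ i ∈ Finset.Icc J₀ (jf k), ∑' m, a i (m + N) < (2:ℝ)⁻¹ ^ k := by
      rw [eventually_all_finset]
      intro i _
      exact (tendsto_order.1 (tendsto_sum_nat_add (a i))).2 _ (by positivity)
    exact eventually_atTop.1 h
  choose T hT using htail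
  -- The sparse sequence of indices
  obtain ⟨nf, hnf2, hnfT⟩ : ∃ nf : ℕ → ℕ, (∀ k, nf k + 2 ≤ nf (k + 1)) ∧ ∀ k, T k ≤ nf k := by
    refine ⟨fun k => Nat.rec (T 0) (fun k ih => max (ih + 2) (T (k + 1))) k,
      fun k => le_max_left _ _, fun k => ?_⟩
    cases k with
    | zero => exact le_rfl
    | succ k => exact le_max_right _ _
  have hnf_mono : StrictMono nf := strictMono_nat_of_lt_succ (fun k => by
    have := hnf2 k; omega)
  have htailk : ∀ k, ∀ i, J₀ ≤ i → i ≤ jf k → ∑' m, a i (m + nf k) < (2:ℝ)⁻¹ ^ k :=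
    fun k i h1 h2 => hT k (nf k) (hnfT k) i (Finset.mem_Icc.2 ⟨h1, h2⟩)
  have hinj := hnf_mono.injective
  -- The largest stage `k` with `jf k ≤ j`
  set K : ℕ → ℕ := fun j => Nat.findGreatest (fun k => jf k ≤ j) j with hK_def
  have hK_tendsto : Tendsto K atTop atTop := by
    rw [tendsto_atTop]
    intro b
    rw [eventually_atTop]
    refine ⟨jf b, fun j hj => ?_⟩
    exact Nat.le_findGreatest (le_trans (hjf_mono.le_apply) hj) hj
  -- The explicit bound sequence
  set c : ℕ → ℝ := fun k => ((k : ℝ) + 1) * (4:ℝ)⁻¹ ^ k + (2:ℝ)⁻¹ ^ k with hc_def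
  have hc_tendsto : Tendsto c atTop (𝓝 0) := by
    have h1 : Summable (fun n : ℕ => (n : ℝ) * (4:ℝ)⁻¹ ^ n) := by
      have := summable_pow_mul_geometric_of_norm_lt_one (R := ℝ) 1 (r := (4:ℝ)⁻¹)
        (by rw [Real.norm_eq_abs, abs_of_nonneg] <;> norm_num)
      simpa using this
    have h2 := h1.tendsto_atTop_zero
    have h3 : Tendsto (fun k : ℕ => (4:ℝ)⁻¹ ^ k) atTop (𝓝 0) :=
      tendsto_pow_atTop_nhds_zero_of_lt_one (by norm_num) (by norm_num)
    have h4 : Tendsto (fun k : ℕ => (2:ℝ)⁻¹ ^ k) atTop (𝓝 0) :=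
      tendsto_pow_atTop_nhds_zero_of_lt_one (by norm_num) (by norm_num)
    have := (h2.add h3).add h4
    simp only [add_zero] at this
    refine this.congr (fun k => ?_)
    simp only [hc_def]; ring
  -- The key estimate: the sum of `a j` over the range of `nf` tends to `0`
  have key : Tendsto (fun j => ∑' i, a j (nf i)) atTop (𝓝 0) := by
    apply squeeze_zero' (g := fun j => c (K j))
    · exact Eventually.of_forall (fun j => tsum_nonneg (fun i => ha j (nf i)))
    · rw [eventually_atTop]
      refine ⟨jf 0, fun j hj => ?_⟩
      set k := K j with hk_def
      have hk1 : jf k ≤ j := Nat.findGreatest_spec (P := fun k => jf k ≤ j) (m := 0) (Nat.zero_le j) hj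
      have hk2 : j < jf (k + 1) := by
        rcases le_or_gt (k + 1) j with h | h
        · by_contra hcon
          exact Nat.findGreatest_is_greatest (Nat.lt_succ_self k) h (not_lt.1 hcon)
        · exact lt_of_lt_of_le h hjf_mono.le_apply
      have hjJ0 : J₀ ≤ j := le_trans (hjfJ0 k) hk1
      have hsum : Summable (a j) := hJ₀ j hjJ0
      have hcomp : Summable (fun i => a j (nf i)) := hsum.comp_injective hinj
      have hsplit := Summable.sum_add_tsum_nat_add (f := fun i => a j (nf i)) (k + 1) hcomp
      -- bound the head
      have hhead : ∑ i ∈ Finset.range (k + 1), a j (nf i) ≤ ((k : ℝ) + 1) * (4:ℝ)⁻¹ ^ k := by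
        calc ∑ i ∈ Finset.range (k + 1), a j (nf i)
            ≤ ∑ _i ∈ Finset.range (k + 1), (4:ℝ)⁻¹ ^ k := by
              refine Finset.sum_le_sum (fun i _ => ?_)
              exact le_of_lt (lt_of_le_of_lt (le_ciSup (hb j) (nf i)) (hsupk k j hk1))
        _ = ((k : ℝ) + 1) * (4:ℝ)⁻¹ ^ k := by
              rw [Finset.sum_const, Finset.card_range, nsmul_eq_mul]
              push_cast; ring
      -- bound the tail
      have htail1 : ∑' i, a j (nf (i + (k + 1))) ≤ ∑' m, a j (m + nf (k + 1)) := by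
        refine Summable.tsum_le_tsum_of_inj (fun i => nf (i + (k + 1)) - nf (k + 1)) ?_ ?_ ?_ ?_ ?_
        · intro i i' h
          dsimp only at h
          have ha1 : k + 1 ≤ i + (k + 1) := by omega
          have ha2 : k + 1 ≤ i' + (k + 1) := by omega
          have h1 : nf (k + 1) ≤ nf (i + (k + 1)) := hnf_mono.monotone ha1
          have h2 : nf (k + 1) ≤ nf (i' + (k + 1)) := hnf_mono.monotone ha2
          have : nf (i + (k + 1)) = nf (i' + (k + 1)) := by omega
          have := hinj this
          omega
        · intro m _
          exact ha j _
        · intro i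
          have ha1 : k + 1 ≤ i + (k + 1) := by omega
          have h1 : nf (k + 1) ≤ nf (i + (k + 1)) := hnf_mono.monotone ha1
          show a j (nf (i + (k + 1))) ≤ a j (nf (i + (k + 1)) - nf (k + 1) + nf (k + 1))
          have heq : nf (i + (k + 1)) - nf (k + 1) + nf (k + 1) = nf (i + (k + 1)) := by omega
          rw [heq]
        · exact hcomp.comp_injective (add_left_injective (k + 1))
        · exact hsum.comp_injective (add_left_injective (nf (k + 1)))
      have htail2 : ∑' m, a j (m + nf (k + 1)) < (2:ℝ)⁻¹ ^ (k + 1) :=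
        htailk (k + 1) j hjJ0 (le_of_lt hk2)
      have htail3 : ((2:ℝ)⁻¹) ^ (k + 1) ≤ (2:ℝ)⁻¹ ^ k :=
        pow_le_pow_of_le_one (by norm_num) (by norm_num) (by omega)
      calc ∑' i, a j (nf i)
          = ∑ i ∈ Finset.range (k + 1), a j (nf i) + ∑' i, a j (nf (i + (k + 1))) := hsplit.symm
      _ ≤ ((k : ℝ) + 1) * (4:ℝ)⁻¹ ^ k + (2:ℝ)⁻¹ ^ k := by
            have := le_trans htail1 (le_trans (le_of_lt htail2) htail3)
            exact add_le_add hhead this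
      _ = c k := rfl
    · exact hc_tendsto.comp hK_tendsto
  -- tsum over the indicator of the range of nf
  have hind : ∀ j, ∑' m, (Set.range nf).indicator (a j) m = ∑' i, a j (nf i) := by
    intro j
    rw [← tsum_subtype]
    exact ((Equiv.ofInjective nf hinj).tsum_eq (fun x => a j (x : ℕ))).symm
  have key' : Tendsto (fun j => ∑' m, (Set.range nf).indicator (a j) m) atTop (𝓝 0) :=
    key.congr (fun j => (hind j).symm)
  -- the sequence u
  refine ⟨fun m => if m ∈ Set.range nf then 0 else 1, ?_, ?_, ?_⟩
  · intro m
    dsimp only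
    split <;> norm_num
  · -- A-statistical convergence to 1
    intro ε hε
    apply squeeze_zero' (g := fun j => ∑' m, (Set.range nf).indicator (a j) m)
    · refine Eventually.of_forall (fun j => tsum_nonneg (fun m => ?_))
      split
      · exact ha j m
      · exact le_rfl
    · rw [eventually_atTop]
      refine ⟨J₀, fun j hj => ?_⟩
      have hsum : Summable (a j) := hJ₀ j hj
      have hle : ∀ m, (if ε ≤ |(if m ∈ Set.range nf then (0:ℝ) else 1) - 1| then a j m else 0)
          ≤ (Set.range nf).indicator (a j) m := by
        intro m
        by_cases hm : m ∈ Set.range nf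
        · rw [Set.indicator_of_mem hm]
          by_cases hif : ε ≤ |(if m ∈ Set.range nf then (0:ℝ) else 1) - 1|
          · rw [if_pos hif]
          · rw [if_neg hif]; exact ha j m
        · rw [Set.indicator_of_notMem hm, if_neg hm]
          rw [if_neg (by simpa using not_le.2 hε)]
      refine Summable.tsum_le_tsum hle ?_ ?_
      · refine hsum.of_nonneg_of_le (fun m => ?_) (fun m => ?_)
        · split
          · exact ha j m
          · exact le_rfl
        · split
          · exact le_rfl
          · exact ha j m
      · refine hsum.of_nonneg_of_le (fun m => ?_) (fun m => ?_)
        · exact Set.indicator_nonneg (fun x _ => ha j x) m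
        · by_cases hm : m ∈ Set.range nf
          · rw [Set.indicator_of_mem hm]
          · rw [Set.indicator_of_notMem hm]; exact ha j m
    · exact key'
  · -- not convergent
    rintro ⟨L, hL⟩
    have h0 : Tendsto (fun k => if nf k ∈ Set.range nf then (0:ℝ) else 1) atTop (𝓝 L) :=
      hL.comp hnf_mono.tendsto_atTop
    have h0' : Tendsto (fun _ : ℕ => (0:ℝ)) atTop (𝓝 L) := by
      refine h0.congr (fun k => ?_)
      rw [if_pos ⟨k, rfl⟩]
    have hL0 : L = 0 := (tendsto_nhds_unique tendsto_const_nhds h0').symm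
    have hnotin : ∀ k, nf k + 1 ∉ Set.range nf := by
      rintro k ⟨i, hi⟩
      rcases le_or_gt i k with h | h
      · have := hnf_mono.monotone h
        omega
      · have h1 : nf (k + 1) ≤ nf i := hnf_mono.monotone h
        have := hnf2 k
        omega
    have hmono1 : StrictMono (fun k => nf k + 1) := fun i j h => by
      dsimp only; have := hnf_mono h; omega
    have h1 : Tendsto (fun k => if nf k + 1 ∈ Set.range nf then (0:ℝ) else 1) atTop (𝓝 L) :=
      hL.comp hmono1.tendsto_atTop
    have h1' : Tendsto (fun _ : ℕ => (1:ℝ)) atTop (𝓝 L) := by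
      refine h1.congr (fun k => ?_)
      rw [if_neg (hnotin k)]
    have hL1 : L = 1 := (tendsto_nhds_unique tendsto_const_nhds h1').symm
    rw [hL0] at hL1
    norm_num at hL1
end

section
/- For the operators T_n(f; x, y) = (u_n / ((1+x)^n (1+y)^n)) \sum_{k=0}^n \sum_{l=0}^n f(k/(n-k+1), l/(n-l+1)) \binom{n}{k} \binom{n}{l} x^k y^l and f_1(u,v) = u/(1+u), one has T_n(f_1; x, y) = (n u_n / (n+1)) \cdot x/(1+x) for all x, y \ge 0 and all n \in \mathbb{N}. -/
/-- The two-variable Bleimann–Butzer–Hahn operators scaled by `u n`. -/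
noncomputable def T (u : ℕ → ℝ) (n : ℕ) (f : ℝ → ℝ → ℝ) (x y : ℝ) : ℝ :=
  u n / ((1 + x) ^ n * (1 + y) ^ n) *
    ∑ k ∈ Finset.range (n + 1), ∑ l ∈ Finset.range (n + 1),
      f ((k : ℝ) / ((n : ℝ) - k + 1)) ((l : ℝ) / ((n : ℝ) - l + 1)) *
        (n.choose k : ℝ) * (n.choose l : ℝ) * x ^ k * y ^ l

lemma binom_sum (n : ℕ) (x : ℝ) :
    ∑ k ∈ Finset.range (n + 1), (n.choose k : ℝ) * x ^ k = (1 + x) ^ n := by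
  rw [show (1 + x) ^ n = (x + 1) ^ n by rw [add_comm], add_pow]
  refine Finset.sum_congr rfl fun k _ => ?_
  ring

lemma binom_sum' (n : ℕ) (x : ℝ) :
    ∑ k ∈ Finset.range (n + 1), (k : ℝ) * (n.choose k : ℝ) * x ^ k
      = (n : ℝ) * x * (1 + x) ^ (n - 1) := by
  cases n with
  | zero => simp
  | succ m =>
    rw [Finset.sum_range_succ']
    simp only [Nat.cast_zero, zero_mul, pow_zero, mul_one, add_zero]
    push_cast
    have h : ∀ j : ℕ, ((j : ℝ) + 1) * ((m + 1).choose (j + 1) : ℝ)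
        = ((m : ℝ) + 1) * (m.choose j : ℝ) := by
      intro j
      have := Nat.add_one_mul_choose_eq m j
      have : ((m + 1) * m.choose j : ℕ) = ((m + 1).choose (j + 1) * (j + 1) : ℕ) := this
      have := congrArg (fun t : ℕ => (t : ℝ)) this
      push_cast at this
      linarith
    calc ∑ j ∈ Finset.range (m + 1), ((j : ℝ) + 1) * ((m + 1).choose (j + 1) : ℝ) * x ^ (j + 1)
        = ∑ j ∈ Finset.range (m + 1), ((m : ℝ) + 1) * x * ((m.choose j : ℝ) * x ^ j) := by
          refine Finset.sum_congr rfl fun j _ => ?_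
          rw [show ((j : ℝ) + 1) * ((m + 1).choose (j + 1) : ℝ) * x ^ (j + 1)
              = (((j : ℝ) + 1) * ((m + 1).choose (j + 1) : ℝ)) * x ^ (j + 1) by ring, h j]
          ring
      _ = ((m : ℝ) + 1) * x * (1 + x) ^ m := by
          rw [← Finset.mul_sum, binom_sum]

/-- `T_n(f₁; x, y) = (n uₙ/(n+1)) · x/(1+x)` where `f₁(u,v) = u/(1+u)`. -/
theorem stmt9 (u : ℕ → ℝ) (hu : ∀ n, 0 ≤ u n) (n : ℕ) (x y : ℝ)
    (hx : 0 ≤ x) (hy : 0 ≤ y) :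
    T u n (fun s _ => s / (1 + s)) x y =
      (n : ℝ) * u n / ((n : ℝ) + 1) * (x / (1 + x)) := by
  have hx1 : (0 : ℝ) < 1 + x := by linarith
  have hy1 : (0 : ℝ) < 1 + y := by linarith
  have hn1 : ((n : ℝ) + 1) ≠ 0 := by positivity
  have key : ∀ k ∈ Finset.range (n + 1),
      ((k : ℝ) / ((n : ℝ) - k + 1)) / (1 + (k : ℝ) / ((n : ℝ) - k + 1))
        = (k : ℝ) / ((n : ℝ) + 1) := by
    intro k hk
    have hk' : (k : ℝ) ≤ n := by
      exact_mod_cast Nat.lt_succ_iff.mp (Finset.mem_range.mp hk)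
    have hd : ((n : ℝ) - k + 1) ≠ 0 := by linarith
    have he : 1 + (k : ℝ) / ((n : ℝ) - k + 1) = ((n : ℝ) + 1) / ((n : ℝ) - k + 1) := by
      field_simp
      ring
    rw [he, div_div_div_cancel_right₀]
    exact hd
  unfold T
  have hS : (∑ k ∈ Finset.range (n + 1), ∑ l ∈ Finset.range (n + 1),
      (fun s _ => s / (1 + s)) ((k : ℝ) / ((n : ℝ) - k + 1)) ((l : ℝ) / ((n : ℝ) - l + 1)) *
        (n.choose k : ℝ) * (n.choose l : ℝ) * x ^ k * y ^ l)
      = ∑ k ∈ Finset.range (n + 1), ∑ l ∈ Finset.range (n + 1),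
        (k : ℝ) / ((n : ℝ) + 1) * (n.choose k : ℝ) * (n.choose l : ℝ) * x ^ k * y ^ l := by
    refine Finset.sum_congr rfl fun k hk => Finset.sum_congr rfl fun l hl => ?_
    simp only
    rw [key k hk]
  rw [hS]
  have : ∑ k ∈ Finset.range (n + 1), ∑ l ∈ Finset.range (n + 1),
      (k : ℝ) / ((n : ℝ) + 1) * (n.choose k : ℝ) * (n.choose l : ℝ) * x ^ k * y ^ l
      = (1 / ((n : ℝ) + 1)) * ((n : ℝ) * x * (1 + x) ^ (n - 1)) * (1 + y) ^ n := by
    rw [← binom_sum' n x, ← binom_sum n y, mul_assoc, Finset.sum_mul_sum]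
    simp only [Finset.mul_sum]
    refine Finset.sum_congr rfl fun k _ => Finset.sum_congr rfl fun l _ => by ring
  rw [this]
  cases n with
  | zero => simp
  | succ m =>
    have hpow : (1 + x) ^ (m + 1) = (1 + x) ^ m * (1 + x) := pow_succ _ _
    simp only [Nat.add_sub_cancel] at *
    rw [hpow]
    have hxm : (1 + x) ^ m ≠ 0 := by positivity
    have hyn : (1 + y) ^ (m + 1) ≠ 0 := by positivity
    push_cast
    field_simp
end

section
/- For the scaled two-variable Bleimann–Butzer–Hahn operators T_n with factor u_n and f_3(u,v) = (u/(1+u))^2 + (v/(1+v))^2, one has \sup_{(x,y)\in[0,\infty)^2} |T_n(f_3; x,y) - f_3(x,y)| \le 2(\alpha_n + \beta_n), where \alpha_n = |n(n-1)u_n/(n+1)^2 - 1| and \beta_n = n u_n/(n+1)^2. -/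
/-- Sup norm on `K = [0,∞)²`. -/
noncomputable def supNorm (g : ℝ → ℝ → ℝ) : ℝ :=
  sSup {m | ∃ x y : ℝ, 0 ≤ x ∧ 0 ≤ y ∧ m = |g x y|}

open Finset

namespace bernsteinPolynomial

open Polynomial

lemma sum_sq_smul (R : Type*) [CommRing R] (n : ℕ) :
    ∑ ν ∈ range (n + 1), ν ^ 2 • bernsteinPolynomial R n ν = (n * (n - 1)) • X ^ 2 + n • X := by
  have h_sq (ν : ℕ) : ν ^ 2 = ν * (ν - 1) + ν := by cases ν <;> simp [sq]; ring
  simp_rw [h_sq, add_smul, sum_add_distrib, sum_mul_smul, sum_smul]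

lemma eval_div_one_add_mul_pow {K : Type*} [Field K] {n k : ℕ} (hk : k ≤ n) {x : K}
    (hx : 1 + x ≠ 0) :
    (bernsteinPolynomial K n k).eval (x / (1 + x)) * (1 + x) ^ n = n.choose k * x ^ k := by
  obtain ⟨m, rfl⟩ := Nat.exists_eq_add_of_le hk
  have h_one_sub : 1 - x / (1 + x) = 1 / (1 + x) := by field_simp; ring
  simp only [bernsteinPolynomial, eval_mul, eval_pow, eval_sub, eval_one, eval_X, eval_natCast,
    h_one_sub, Nat.add_sub_cancel_left, div_pow, one_pow, pow_add]
  field_simp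

end bernsteinPolynomial

lemma sum_choose_mul_pow {R : Type*} [CommSemiring R] (n : ℕ) (x : R) :
    ∑ k ∈ range (n + 1), (n.choose k : R) * x ^ k = (1 + x) ^ n := by
  simp [add_comm 1 x, add_pow, mul_comm]

lemma sum_sq_mul_choose_mul_pow {K : Type*} [Field K] (n : ℕ) {x : K} (hx : 1 + x ≠ 0) :
    ∑ k ∈ range (n + 1), (k : K) ^ 2 * (n.choose k * x ^ k) =
      (n * (n - 1) * (x / (1 + x)) ^ 2 + n * (x / (1 + x))) * (1 + x) ^ n := by
  have h_moment :=
    congrArg (Polynomial.eval (x / (1 + x))) (bernsteinPolynomial.sum_sq_smul K n)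
  have h_cast : ((n * (n - 1) : ℕ) : K) = n * (n - 1) := by cases n <;> simp
  simp only [Polynomial.eval_finsetSum, Polynomial.eval_add, nsmul_eq_mul, Polynomial.eval_mul,
    Polynomial.eval_natCast, Polynomial.eval_pow, Polynomial.eval_X, h_cast,
    Nat.cast_pow] at h_moment
  rw [← h_moment, sum_mul]
  refine sum_congr rfl fun k hk => ?_
  rw [mul_assoc, bernsteinPolynomial.eval_div_one_add_mul_pow (mem_range_succ_iff.mp hk) hx]

lemma div_sub_add_one_div_one_add_self {K : Type*} [Field K] {a b : K} (hba : b - a + 1 ≠ 0) :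
    a / (b - a + 1) / (1 + a / (b - a + 1)) = a / (b + 1) := by
  have h_denom : 1 + a / (b - a + 1) = (b + 1) / (b - a + 1) := by field_simp; ring
  rw [h_denom, div_div_div_cancel_right₀ hba]

lemma sum_sum_add_mul_mul {ι κ R : Type*} [CommSemiring R] (s : Finset ι) (t : Finset κ)
    (a p : ι → R) (c q : κ → R) :
    ∑ i ∈ s, ∑ j ∈ t, (a i + c j) * (p i * q j) =
      (∑ i ∈ s, a i * p i) * ∑ j ∈ t, q j + (∑ i ∈ s, p i) * ∑ j ∈ t, c j * q j := by
  simp only [sum_mul_sum, ← sum_add_distrib]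
  exact sum_congr rfl fun i _ => sum_congr rfl fun j _ => by ring

lemma T_sq_div_one_add_eq (u : ℕ → ℝ) (n : ℕ) {x y : ℝ} (hx : 1 + x ≠ 0) (hy : 1 + y ≠ 0) :
    T u n (fun s t => (s / (1 + s)) ^ 2 + (t / (1 + t)) ^ 2) x y =
      n * (n - 1) * u n / (n + 1) ^ 2 * ((x / (1 + x)) ^ 2 + (y / (1 + y)) ^ 2) +
        n * u n / (n + 1) ^ 2 * (x / (1 + x) + y / (1 + y)) := by
  have h_node {k : ℕ} (hk : k ∈ range (n + 1)) :
      (k / ((n : ℝ) - k + 1)) / (1 + k / ((n : ℝ) - k + 1)) = k / (n + 1) := by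
    have : (k : ℝ) ≤ n := by exact_mod_cast mem_range_succ_iff.mp hk
    exact div_sub_add_one_div_one_add_self (by linarith)
  have h_sum : ∑ k ∈ range (n + 1), ∑ l ∈ range (n + 1),
      ((k / ((n : ℝ) - k + 1) / (1 + k / ((n : ℝ) - k + 1))) ^ 2 +
        (l / ((n : ℝ) - l + 1) / (1 + l / ((n : ℝ) - l + 1))) ^ 2) *
        (n.choose k : ℝ) * (n.choose l : ℝ) * x ^ k * y ^ l =
      (((n : ℝ) + 1) ^ 2)⁻¹ * ∑ k ∈ range (n + 1), ∑ l ∈ range (n + 1),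
        ((k : ℝ) ^ 2 + (l : ℝ) ^ 2) * ((n.choose k * x ^ k) * (n.choose l * y ^ l)) := by
    rw [mul_sum]
    refine sum_congr rfl fun k hk => ?_
    rw [mul_sum]
    refine sum_congr rfl fun l hl => ?_
    rw [h_node hk, h_node hl]
    field_simp
  unfold T
  rw [h_sum, sum_sum_add_mul_mul, sum_choose_mul_pow, sum_choose_mul_pow,
    sum_sq_mul_choose_mul_pow n hx, sum_sq_mul_choose_mul_pow n hy]
  field_simp
  ring

lemma abs_mul_add_mul_sub_le {a b s t : ℝ} (hb : 0 ≤ b) (hs : s ∈ Set.Icc 0 1)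
    (ht : t ∈ Set.Icc 0 1) :
    |a * (s ^ 2 + t ^ 2) + b * (s + t) - (s ^ 2 + t ^ 2)| ≤ 2 * (|a - 1| + b) := by
  obtain ⟨hs0, hs1⟩ := hs
  obtain ⟨ht0, ht1⟩ := ht
  have h_sq : s ^ 2 + t ^ 2 ≤ 2 := by nlinarith
  calc |a * (s ^ 2 + t ^ 2) + b * (s + t) - (s ^ 2 + t ^ 2)|
      = |(a - 1) * (s ^ 2 + t ^ 2) + b * (s + t)| := by ring_nf
    _ ≤ |a - 1| * (s ^ 2 + t ^ 2) + b * (s + t) := by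
        refine (abs_add_le _ _).trans ?_
        rw [abs_mul, abs_mul, abs_of_nonneg hb, abs_of_nonneg (by positivity : 0 ≤ s ^ 2 + t ^ 2),
          abs_of_nonneg (by positivity : 0 ≤ s + t)]
    _ ≤ |a - 1| * 2 + b * 2 := by gcongr; linarith
    _ = 2 * (|a - 1| + b) := by ring

lemma div_one_add_mem_Icc {x : ℝ} (hx : 0 ≤ x) : x / (1 + x) ∈ Set.Icc 0 1 :=
  ⟨by positivity, div_le_one_of_le₀ (by linarith) (by positivity)⟩

/-- `‖Tₙ f₃ - f₃‖ ≤ 2(αₙ + βₙ)`. -/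
theorem stmt12 (u : ℕ → ℝ) (hu : ∀ n, 0 ≤ u n) (n : ℕ) :
    supNorm (fun x y =>
        T u n (fun s t => (s / (1 + s)) ^ 2 + (t / (1 + t)) ^ 2) x y -
          ((x / (1 + x)) ^ 2 + (y / (1 + y)) ^ 2)) ≤
      2 * (|(n : ℝ) * ((n : ℝ) - 1) * u n / ((n : ℝ) + 1) ^ 2 - 1| +
           (n : ℝ) * u n / ((n : ℝ) + 1) ^ 2) := by
  have hβ : 0 ≤ (n : ℝ) * u n / ((n : ℝ) + 1) ^ 2 := by have := hu n; positivity
  refine Real.sSup_le ?_ (by positivity)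
  rintro _ ⟨x, y, hx, hy, rfl⟩
  dsimp only
  rw [T_sq_div_one_add_eq u n (by positivity) (by positivity)]
  exact abs_mul_add_mul_sub_le hβ (div_one_add_mem_Icc hx) (div_one_add_mem_Icc hy)
end
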